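/- arXiv:1608.04091 — 3 statements merged into one kernel-verified Lean document; each statement's English description precedes it below -/
import Mathlib

section
/- The equality {y : φ_{A,k}(y) ≤ t} = A + tk holds for all t ∈ ℝ if and only if k ∈ −0⁺A and A is k-directionally closed. -/
/-- `phi A k y = inf { t : ℝ | y ∈ A + t • k }`, valued in `EReal`
(`⊤` plays the role of the symbol `ν = inf ∅`, `⊥` is `-∞`). -/
noncomputable def phi {Y : Type*} [AddCommGroup Y] [Module ℝ Y]
    (A : Set Y) (k : Y) (y : Y) : EReal :=
  sInf ((fun t : ℝ => (t : EReal)) '' {t : ℝ | y - t • k ∈ A})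

/-- The algebraic interior (core) of a set. -/
def algCore {Y : Type*} [AddCommGroup Y] [Module ℝ Y] (A : Set Y) : Set Y :=
  {a | a ∈ A ∧ ∀ y : Y, ∃ t : ℝ, 0 < t ∧ ∀ s : ℝ, 0 ≤ s → s ≤ t → a + s • y ∈ A}

/-- The recession cone `0⁺A`. -/
def recCone {Y : Type*} [AddCommGroup Y] [Module ℝ Y] (A : Set Y) : Set Y :=
  {u | ∀ a ∈ A, ∀ t : ℝ, 0 ≤ t → a + t • u ∈ A}

/-- `A` is `k`-directionally closed. -/
def DirClosed {Y : Type*} [AddCommGroup Y] [Module ℝ Y] (A : Set Y) (k : Y) : Prop :=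
  ∀ y : Y, (∃ t : ℕ → ℝ, (∀ n, 0 < t n) ∧ Antitone t ∧
    Filter.Tendsto t Filter.atTop (nhds 0) ∧ ∀ n, y - t n • k ∈ A) → y ∈ A

/-- `A` is algebraically closed. -/
def AlgClosed {Y : Type*} [AddCommGroup Y] [Module ℝ Y] (A : Set Y) : Prop :=
  ∀ a ∈ A, ∀ y : Y, (∀ l : ℝ, 0 < l → l < 1 → a + l • (y - a) ∈ A) → y ∈ A

/-- `C` is a cone: closed under nonnegative scalar multiplication. -/
def IsCone {Y : Type*} [AddCommGroup Y] [Module ℝ Y] (C : Set Y) : Prop :=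
  ∀ l : ℝ, 0 ≤ l → ∀ c ∈ C, l • c ∈ C

/-!
Because `-k` recedes, `{t | y - t • k ∈ A}` is an up-set of `ℝ`, so `phi A k y ≤ t` says exactly
that `y - (t + ε) • k ∈ A` for every `ε > 0`; directional closedness is what lets `ε` reach `0`.
Conversely, the sublevel equality at level `0 ≤ s` moves `a ∈ A` along `-k`, and passing to the
limit in `phi A k y ≤ tₙ` with `tₙ ↓ 0` gives directional closedness.
-/

section

variable {Y : Type*} [AddCommGroup Y] [Module ℝ Y] {A : Set Y} {k y : Y}

theorem phi_le_coe_of_sub_smul_mem {t : ℝ} (h : y - t • k ∈ A) : phi A k y ≤ t :=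
  sInf_le ⟨t, h, rfl⟩

theorem sub_smul_mem_of_le (hk : -k ∈ recCone A) {s t : ℝ} (hs : y - s • k ∈ A) (hst : s ≤ t) :
    y - t • k ∈ A := by
  have h := hk _ hs (t - s) (sub_nonneg.2 hst)
  rwa [smul_neg, sub_smul, ← sub_eq_add_neg, sub_sub, add_sub_cancel] at h

theorem sub_smul_mem_of_phi_lt_coe (hk : -k ∈ recCone A) {t : ℝ} (h : phi A k y < t) :
    y - t • k ∈ A := by
  obtain ⟨_, ⟨s, hs, rfl⟩, hst⟩ := sInf_lt_iff.1 h
  exact sub_smul_mem_of_le hk hs (EReal.coe_lt_coe_iff.1 hst).le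

theorem DirClosed.mem_of_forall_pos (hA : DirClosed A k) (h : ∀ ε : ℝ, 0 < ε → y - ε • k ∈ A) :
    y ∈ A :=
  hA y ⟨fun n => 1 / (n + 1), fun n => by positivity,
    fun _ _ hnm => one_div_le_one_div_of_le (by positivity) (by gcongr),
    tendsto_one_div_add_atTop_nhds_zero_nat, fun n => h _ (by positivity)⟩

theorem phi_le_coe_iff (hk : -k ∈ recCone A) (hA : DirClosed A k) {t : ℝ} :
    phi A k y ≤ t ↔ y - t • k ∈ A := by
  refine ⟨fun h => hA.mem_of_forall_pos fun ε hε => ?_, phi_le_coe_of_sub_smul_mem⟩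
  rw [sub_sub, ← add_smul]
  exact sub_smul_mem_of_phi_lt_coe hk (h.trans_lt (by exact_mod_cast lt_add_of_pos_right t hε))

section SublevelCharacterization

variable (h : ∀ (t : ℝ) (y : Y), phi A k y ≤ (t : EReal) ↔ y - t • k ∈ A)
include h

theorem neg_mem_recCone_of_phi_le_coe_iff : -k ∈ recCone A := by
  intro a ha s hs
  have ha0 : phi A k a ≤ (0 : ℝ) := phi_le_coe_of_sub_smul_mem (by simpa using ha)
  simpa [smul_neg, sub_eq_add_neg] using (h s a).1 (ha0.trans (by exact_mod_cast hs))

theorem dirClosed_of_phi_le_coe_iff : DirClosed A k := by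
  rintro y ⟨t, -, -, ht, hyt⟩
  have hy0 : phi A k y ≤ (0 : ℝ) :=
    ge_of_tendsto' ((continuous_coe_real_ereal.tendsto 0).comp ht)
      fun n => phi_le_coe_of_sub_smul_mem (hyt n)
  simpa using (h 0 y).1 hy0

end SublevelCharacterization

end

theorem sublevel_eq_iff_general {Y : Type*} [AddCommGroup Y] [Module ℝ Y]
    (A : Set Y) (k : Y) :
    (∀ (t : ℝ) (y : Y), phi A k y ≤ (t : EReal) ↔ y - t • k ∈ A) ↔
      (-k ∈ recCone A ∧ DirClosed A k) :=
  ⟨fun h => ⟨neg_mem_recCone_of_phi_le_coe_iff h, dirClosed_of_phi_le_coe_iff h⟩,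
    fun ⟨hk, hA⟩ _ _ => phi_le_coe_iff hk hA⟩

theorem sublevel_eq_iff {Y : Type*} [AddCommGroup Y] [Module ℝ Y]
    (A : Set Y) (hA : A.Nonempty) (k : Y) (hk : k ≠ 0) :
    (∀ (t : ℝ) (y : Y), phi A k y ≤ (t : EReal) ↔ y - t • k ∈ A) ↔
      (-k ∈ recCone A ∧ DirClosed A k) :=
  sublevel_eq_iff_general A k
end

section
/- If A is convex then φ_{A,k} is convex; if A is a cone then φ_{A,k} is positively homogeneous; if A + A ⊆ A then φ_{A,k} is subadditive; if A is a convex cone then φ_{A,k} is sublinear. Conversely, if additionally A is k-directionally closed and k ∈ −0⁺A \ {0}, then each of these conditions on A is necessary for the corresponding property of φ_{A,k}. -/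
/-- The epigraph of `phi A k`. -/
def epiPhi {Y : Type*} [AddCommGroup Y] [Module ℝ Y] (A : Set Y) (k : Y) : Set (Y × ℝ) :=
  {p : Y × ℝ | phi A k p.1 ≤ (p.2 : EReal)}

/-!
Writing `(y, t) ∈ epi φ` as "for every `ε > 0` some `s ≤ t + ε` has `y - s • k ∈ A`", the
three properties pass from `A` to the epigraph through the identities
`a • (y - s • k) + b • (y' - s' • k) = (a • y + b • y') - (a * s + b * s') • k` and their
analogues for scaling and addition. Conversely, when `A` is `k`-directionally closed and
`-k ∈ 0⁺A`, the set `A` is the slice `{y | (y, 0) ∈ epi φ}`, the preimage of the epigraph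
under the linear map `y ↦ (y, 0)`, which inherits each property back.
-/

section

variable {Y : Type*} [AddCommGroup Y] [Module ℝ Y] {A : Set Y} {k y : Y}

theorem phi_lt_coe_iff {z : ℝ} : phi A k y < z ↔ ∃ s < z, y - s • k ∈ A := by
  simp only [phi, sInf_lt_iff, Set.mem_image, Set.mem_ofPred_eq]
  constructor
  · rintro ⟨_, ⟨s, hs, rfl⟩, hsz⟩
    exact ⟨s, EReal.coe_lt_coe_iff.1 hsz, hs⟩
  · rintro ⟨s, hsz, hs⟩
    exact ⟨s, ⟨s, hs, rfl⟩, EReal.coe_lt_coe_iff.2 hsz⟩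

theorem mem_epiPhi_iff {t : ℝ} :
    (y, t) ∈ epiPhi A k ↔ ∀ ε > 0, ∃ s ≤ t + ε, y - s • k ∈ A := by
  change phi A k y ≤ t ↔ _
  constructor
  · intro h ε hε
    obtain ⟨s, hs, hsA⟩ := phi_lt_coe_iff.1 <|
      h.trans_lt (EReal.coe_lt_coe_iff.2 (lt_add_of_pos_right t hε))
    exact ⟨s, hs.le, hsA⟩
  · intro h
    refine EReal.le_of_forall_lt_iff_le.1 fun z hz => (phi_lt_coe_iff.2 ?_).le
    have hz' : t < z := EReal.coe_lt_coe_iff.1 hz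
    obtain ⟨s, hs, hsA⟩ := h ((z - t) / 2) (by linarith)
    exact ⟨s, by linarith, hsA⟩

theorem mem_epiPhi_of_sub_smul_mem {s t : ℝ} (h : y - s • k ∈ A) (hst : s ≤ t) :
    (y, t) ∈ epiPhi A k :=
  mem_epiPhi_iff.2 fun _ hε => ⟨s, by linarith, h⟩

theorem convex_epiPhi (hA : Convex ℝ A) : Convex ℝ (epiPhi A k) := by
  rintro ⟨x, s⟩ hx ⟨y, t⟩ hy a b ha hb hab
  rw [Prod.smul_mk, Prod.smul_mk, Prod.mk_add_mk, mem_epiPhi_iff]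
  intro ε hε
  obtain ⟨s₁, hs₁, hx₁⟩ := mem_epiPhi_iff.1 hx ε hε
  obtain ⟨t₁, ht₁, hy₁⟩ := mem_epiPhi_iff.1 hy ε hε
  refine ⟨a * s₁ + b * t₁, ?_, ?_⟩
  · calc a * s₁ + b * t₁ ≤ a * (s + ε) + b * (t + ε) := by gcongr
      _ = a • s + b • t + ε := by rw [smul_eq_mul, smul_eq_mul]; linear_combination ε * hab
  · convert hA hx₁ hy₁ ha hb hab using 1
    simp only [smul_sub, add_smul, mul_smul]
    abel

theorem smul_mem_epiPhi (hA : IsCone A) {p : Y × ℝ} (hp : p ∈ epiPhi A k) {c : ℝ}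
    (hc : 0 ≤ c) : c • p ∈ epiPhi A k := by
  obtain ⟨y, t⟩ := p
  rw [Prod.smul_mk]
  rcases hc.eq_or_lt with rfl | hc
  · obtain ⟨s, -, hs⟩ := mem_epiPhi_iff.1 hp 1 one_pos
    refine mem_epiPhi_of_sub_smul_mem (s := 0) ?_ (by simp)
    simpa using hA 0 le_rfl _ hs
  · rw [mem_epiPhi_iff]
    intro ε hε
    obtain ⟨s, hs, hsA⟩ := mem_epiPhi_iff.1 hp (ε / c) (by positivity)
    refine ⟨c * s, ?_, ?_⟩
    · calc c * s ≤ c * (t + ε / c) := by gcongr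
        _ = c • t + ε := by rw [smul_eq_mul]; field_simp
    · simpa [smul_sub, mul_smul] using hA c hc.le _ hsA

theorem add_mem_epiPhi (hA : ∀ a ∈ A, ∀ b ∈ A, a + b ∈ A) {p q : Y × ℝ}
    (hp : p ∈ epiPhi A k) (hq : q ∈ epiPhi A k) : p + q ∈ epiPhi A k := by
  obtain ⟨x, s⟩ := p
  obtain ⟨y, t⟩ := q
  rw [Prod.mk_add_mk, mem_epiPhi_iff]
  intro ε hε
  obtain ⟨s₁, hs₁, hx₁⟩ := mem_epiPhi_iff.1 hp (ε / 2) (half_pos hε)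
  obtain ⟨t₁, ht₁, hy₁⟩ := mem_epiPhi_iff.1 hq (ε / 2) (half_pos hε)
  refine ⟨s₁ + t₁, by linarith, ?_⟩
  convert hA _ hx₁ _ hy₁ using 1
  rw [add_smul]
  abel

theorem sub_smul_mem_of_neg_mem_recCone (hk : -k ∈ recCone A) {s s' : ℝ}
    (h : y - s • k ∈ A) (hss' : s ≤ s') : y - s' • k ∈ A := by
  convert hk _ h (s' - s) (sub_nonneg.2 hss') using 1
  rw [smul_neg, sub_smul]
  abel

theorem eq_preimage_inl_epiPhi (hdc : DirClosed A k) (hk : -k ∈ recCone A) :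
    A = LinearMap.inl ℝ Y ℝ ⁻¹' epiPhi A k := by
  ext y
  refine ⟨fun hy => mem_epiPhi_of_sub_smul_mem (s := 0) (by simpa using hy) le_rfl, fun hy => ?_⟩
  refine hdc y ⟨fun n => 1 / (n + 1), fun n => by positivity, fun m n hmn => ?_,
    tendsto_one_div_add_atTop_nhds_zero_nat, fun n => ?_⟩
  · dsimp only; gcongr
  · obtain ⟨s, hs, hsA⟩ := mem_epiPhi_iff.1 hy (1 / (n + 1)) (by positivity)
    exact sub_smul_mem_of_neg_mem_recCone hk hsA (by simpa using hs)

end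

theorem phi_convexity_properties_general {Y : Type*} [AddCommGroup Y] [Module ℝ Y]
    (A : Set Y) (k : Y) :
    (Convex ℝ A → Convex ℝ (epiPhi A k)) ∧
    (IsCone A → ∀ p ∈ epiPhi A k, ∀ c : ℝ, 0 ≤ c → c • p ∈ epiPhi A k) ∧
    ((∀ a ∈ A, ∀ b ∈ A, a + b ∈ A) →
      ∀ p ∈ epiPhi A k, ∀ q ∈ epiPhi A k, p + q ∈ epiPhi A k) ∧
    ((Convex ℝ A ∧ IsCone A) →
      (Convex ℝ (epiPhi A k) ∧ ∀ p ∈ epiPhi A k, ∀ c : ℝ, 0 ≤ c → c • p ∈ epiPhi A k)) ∧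
    (DirClosed A k → -k ∈ recCone A →
      ((Convex ℝ (epiPhi A k) → Convex ℝ A) ∧
       ((∀ p ∈ epiPhi A k, ∀ c : ℝ, 0 ≤ c → c • p ∈ epiPhi A k) → IsCone A) ∧
       ((∀ p ∈ epiPhi A k, ∀ q ∈ epiPhi A k, p + q ∈ epiPhi A k) →
          ∀ a ∈ A, ∀ b ∈ A, a + b ∈ A) ∧
       ((Convex ℝ (epiPhi A k) ∧
          ∀ p ∈ epiPhi A k, ∀ c : ℝ, 0 ≤ c → c • p ∈ epiPhi A k) →
          Convex ℝ A ∧ IsCone A))) := by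
  refine ⟨convex_epiPhi, fun hA _ => smul_mem_epiPhi hA, fun hA _ hp _ hq => add_mem_epiPhi hA hp hq,
    fun hA => ⟨convex_epiPhi hA.1, fun _ => smul_mem_epiPhi hA.2⟩, fun hdc hk => ?_⟩
  have hslice := eq_preimage_inl_epiPhi hdc hk
  have convex_of : Convex ℝ (epiPhi A k) → Convex ℝ A := fun h => hslice ▸ h.linear_preimage _
  have cone_of : (∀ p ∈ epiPhi A k, ∀ c : ℝ, 0 ≤ c → c • p ∈ epiPhi A k) → IsCone A := by
    intro h c hc y hy
    rw [hslice] at hy ⊢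
    simpa using h _ hy c hc
  refine ⟨convex_of, cone_of, fun h a ha b hb => ?_, fun h => ⟨convex_of h.1, cone_of h.2⟩⟩
  rw [hslice] at ha hb ⊢
  simpa using h _ ha _ hb

theorem phi_convexity_properties {Y : Type*} [AddCommGroup Y] [Module ℝ Y]
    (A : Set Y) (hA : A.Nonempty) (hAne : A ≠ Set.univ) (k : Y) (hk : k ≠ 0) :
    (Convex ℝ A → Convex ℝ (epiPhi A k)) ∧
    (IsCone A → ∀ p ∈ epiPhi A k, ∀ c : ℝ, 0 ≤ c → c • p ∈ epiPhi A k) ∧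
    ((∀ a ∈ A, ∀ b ∈ A, a + b ∈ A) →
      ∀ p ∈ epiPhi A k, ∀ q ∈ epiPhi A k, p + q ∈ epiPhi A k) ∧
    ((Convex ℝ A ∧ IsCone A) →
      (Convex ℝ (epiPhi A k) ∧ ∀ p ∈ epiPhi A k, ∀ c : ℝ, 0 ≤ c → c • p ∈ epiPhi A k)) ∧
    (DirClosed A k → -k ∈ recCone A →
      ((Convex ℝ (epiPhi A k) → Convex ℝ A) ∧
       ((∀ p ∈ epiPhi A k, ∀ c : ℝ, 0 ≤ c → c • p ∈ epiPhi A k) → IsCone A) ∧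
       ((∀ p ∈ epiPhi A k, ∀ q ∈ epiPhi A k, p + q ∈ epiPhi A k) →
          ∀ a ∈ A, ∀ b ∈ A, a + b ∈ A) ∧
       ((Convex ℝ (epiPhi A k) ∧
          ∀ p ∈ epiPhi A k, ∀ c : ℝ, 0 ≤ c → c • p ∈ epiPhi A k) →
          Convex ℝ A ∧ IsCone A))) :=
  phi_convexity_properties_general A k
end

section
/- Suppose A − B ⊆ A and φ_{A,k} is finite-valued on F ⊆ Y. Then φ_{A,k} is strictly (core B)-monotone on F: for y¹, y² ∈ F with y² − y¹ ∈ core B \ {0}, φ_{A,k}(y¹) < φ_{A,k}(y²). -/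
/-!
Since `y² - y¹` lies in the core of `B`, moving from it a little in the direction `-k` stays in `B`:
`y² - y¹ - s • k ∈ B` for some `s > 0`. Removing an element of `B` can only decrease `φ` (because
`A - B ⊆ A`), and translating by `s • k` raises `φ` by at least `s`, so
`φ(y¹) + s ≤ φ(y¹ + s • k) = φ(y² - (y² - y¹ - s • k)) ≤ φ(y²)`; finiteness of `φ(y¹)` makes this strict.
-/

section

variable {Y : Type*} [AddCommGroup Y] [Module ℝ Y]

lemma phi_le_of_sub_smul_mem {A : Set Y} {k y : Y} {t : ℝ} (h : y - t • k ∈ A) :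
    phi A k y ≤ t :=
  sInf_le ⟨t, h, rfl⟩

lemma phi_add_le_phi_add_smul (A : Set Y) (k y : Y) (s : ℝ) :
    phi A k y + s ≤ phi A k (y + s • k) := by
  refine le_sInf ?_
  rintro _ ⟨t, ht, rfl⟩
  refine EReal.add_le_of_le_sub ?_
  rw [← EReal.coe_sub]
  refine phi_le_of_sub_smul_mem ?_
  rwa [sub_smul, sub_sub_eq_add_sub]

lemma phi_sub_le_of_mem {A B : Set Y} (hAB : ∀ a ∈ A, ∀ b ∈ B, a - b ∈ A) (k y : Y) {b : Y}
    (hb : b ∈ B) : phi A k (y - b) ≤ phi A k y :=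
  sInf_le_sInf <| Set.image_mono fun t (ht : y - t • k ∈ A) =>
    show y - b - t • k ∈ A from sub_right_comm y b (t • k) ▸ hAB _ ht b hb

lemma exists_add_smul_mem_of_mem_algCore {B : Set Y} {d : Y} (hd : d ∈ algCore B) (v : Y) :
    ∃ s : ℝ, 0 < s ∧ d + s • v ∈ B :=
  let ⟨s, hs, h⟩ := hd.2 v
  ⟨s, hs, h s hs.le le_rfl⟩

end

theorem phi_strictly_coreB_monotone_general {Y : Type*} [AddCommGroup Y] [Module ℝ Y]
    (A B : Set Y) (k : Y) (F : Set Y)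
    (hAB : ∀ a ∈ A, ∀ b ∈ B, a - b ∈ A)
    (hfin : ∀ y ∈ F, ∃ r : ℝ, phi A k y = (r : EReal)) :
    ∀ y1 ∈ F, ∀ y2 ∈ F, y2 - y1 ∈ algCore B → y2 - y1 ≠ 0 →
      phi A k y1 < phi A k y2 := by
  intro y1 hy1 y2 _ hcore _
  obtain ⟨r1, hr1⟩ := hfin y1 hy1
  obtain ⟨s, hs, hsB⟩ := exists_add_smul_mem_of_mem_algCore hcore (-k)
  have hshift : y2 - (y2 - y1 + s • -k) = y1 + s • k := by
    rw [smul_neg]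
    abel
  calc phi A k y1 = r1 := hr1
    _ < (r1 + s : ℝ) := EReal.coe_lt_coe_iff.2 (lt_add_of_pos_right r1 hs)
    _ = phi A k y1 + s := by rw [hr1, EReal.coe_add]
    _ ≤ phi A k (y1 + s • k) := phi_add_le_phi_add_smul A k y1 s
    _ = phi A k (y2 - (y2 - y1 + s • -k)) := by rw [hshift]
    _ ≤ phi A k y2 := phi_sub_le_of_mem hAB k y2 hsB

theorem phi_strictly_coreB_monotone {Y : Type*} [AddCommGroup Y] [Module ℝ Y]
    (A B : Set Y) (hA : A.Nonempty) (k : Y) (hk : k ≠ 0) (F : Set Y)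
    (hAB : ∀ a ∈ A, ∀ b ∈ B, a - b ∈ A)
    (hfin : ∀ y ∈ F, ∃ r : ℝ, phi A k y = (r : EReal)) :
    ∀ y1 ∈ F, ∀ y2 ∈ F, y2 - y1 ∈ algCore B → y2 - y1 ≠ 0 →
      phi A k y1 < phi A k y2 :=
  phi_strictly_coreB_monotone_general A B k F hAB hfin
end
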